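/- Consider point masses on the torus: f = Σᵢ fᵢ δ_{φᵢ}, g = Σⱼ gⱼ δ_{ψⱼ}, with all φᵢ, ψⱼ ∈ 𝕋¹₊ ∪ 𝕋¹₋, equal masses in each group. If a transference plan π has π_{ij} > 0 for some φᵢ ∈ 𝕋¹₊, ψⱼ ∈ 𝕋¹₋, then there exist i*, j* with φ_{i*} ∈ 𝕋¹₋, ψ_{j*} ∈ 𝕋¹₊ and π_{i*j*} > 0, and the modified plan obtained by moving mass m = min{π_{ij}, π_{i*j*}} via π_{ij} → π_{ij} - m, π_{i*j*} → π_{i*j*} - m, π_{ij*} → π_{ij*} + m, π_{i*j} → π_{i*j} + m has total cost not larger than that of π. -/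

import Mathlib

/-!
Two points of the same arc `𝕋₊` or `𝕋₋` are less than `π/2` apart, while a point of `𝕋₊` and a
point of `𝕋₋` differ by an amount in `[π/2, 3π/2]`, so their torus distance is at least `π/2`.
Hence trading the cross pairs `(i, j)`, `(i*, j*)` for the same-arc pairs `(i, j*)`, `(i*, j)`
cannot increase the cost. The pair `(i*, j*)` exists by mass balance: the plan sends as much mass
from `𝕋₋` to `𝕋₊` as from `𝕋₊` to `𝕋₋`, and the latter is positive.
-/

open MeasureTheory Set Finset

/-- Geodesic (torus) distance between two angles given by real representatives. -/
noncomputable def torDist (x y : ℝ) : ℝ :=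
  dist (x : AddCircle (2*Real.pi)) (y : AddCircle (2*Real.pi))

notation "𝕋₊" => Ioo (Real.pi/4) (3*Real.pi/4)
notation "𝕋₋" => Ioo (-(3*Real.pi/4)) (-(Real.pi/4))

lemma le_norm_coe_addCircle {p c t : ℝ} (hct : c ≤ t) (htp : t ≤ p - c) :
    c ≤ ‖(t : AddCircle p)‖ := by
  rcases le_or_gt c 0 with hc | hc
  · exact hc.trans (norm_nonneg _)
  have hp : 0 < p := by linarith
  rcases le_or_gt t (p / 2) with ht | ht
  · rw [(AddCircle.norm_coe_eq_abs_iff (hp := hp.ne')).2 (by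
      rw [abs_of_pos (by linarith), abs_of_pos hp]; linarith)]
    exact hct.trans (le_abs_self t)
  · have hcoe : ((t - p : ℝ) : AddCircle p) = t := by
      rw [AddCircle.coe_sub, AddCircle.coe_period, sub_zero]
    rw [← hcoe, (AddCircle.norm_coe_eq_abs_iff (hp := hp.ne')).2 (by
      rw [abs_of_neg (by linarith), abs_of_pos hp]; linarith)]
    exact (by linarith : c ≤ -(t - p)).trans (neg_le_abs _)

lemma torDist_eq_norm (x y : ℝ) : torDist x y = ‖((x - y : ℝ) : AddCircle (2*Real.pi))‖ := by
  rw [torDist, dist_eq_norm, AddCircle.coe_sub]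

lemma torDist_le_abs_sub (x y : ℝ) : torDist x y ≤ |x - y| :=
  (torDist_eq_norm x y).trans_le QuotientAddGroup.norm_mk_le_norm

lemma pi_div_two_le_torDist {x y : ℝ} (h₁ : Real.pi/2 ≤ x - y) (h₂ : x - y ≤ 3*Real.pi/2) :
    Real.pi/2 ≤ torDist x y := by
  rw [torDist_eq_norm]
  exact le_norm_coe_addCircle h₁ (by linarith)

lemma torDist_sq_add_torDist_sq_le {x x' y y' : ℝ} (hx : x ∈ 𝕋₊) (hx' : x' ∈ 𝕋₋)
    (hy : y ∈ 𝕋₋) (hy' : y' ∈ 𝕋₊) :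
    torDist x y' ^ 2 + torDist x' y ^ 2 ≤ torDist x y ^ 2 + torDist x' y' ^ 2 := by
  obtain ⟨hx₁, hx₂⟩ := hx
  obtain ⟨hx'₁, hx'₂⟩ := hx'
  obtain ⟨hy₁, hy₂⟩ := hy
  obtain ⟨hy'₁, hy'₂⟩ := hy'
  have near (u v : ℝ) (h : |u - v| ≤ Real.pi/2) : torDist u v ^ 2 ≤ (Real.pi/2) ^ 2 :=
    pow_le_pow_left₀ dist_nonneg ((torDist_le_abs_sub u v).trans h) 2
  have far (u v : ℝ) (h₁ : Real.pi/2 ≤ u - v) (h₂ : u - v ≤ 3*Real.pi/2) :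
      (Real.pi/2) ^ 2 ≤ torDist u v ^ 2 :=
    pow_le_pow_left₀ (by positivity) (pi_div_two_le_torDist h₁ h₂) 2
  calc torDist x y' ^ 2 + torDist x' y ^ 2
      ≤ (Real.pi/2) ^ 2 + (Real.pi/2) ^ 2 :=
        add_le_add (near x y' (abs_le.2 ⟨by linarith, by linarith⟩))
          (near x' y (abs_le.2 ⟨by linarith, by linarith⟩))
    _ ≤ torDist x y ^ 2 + torDist y' x' ^ 2 :=
        add_le_add (far x y (by linarith) (by linarith)) (far y' x' (by linarith) (by linarith))
    _ = torDist x y ^ 2 + torDist x' y' ^ 2 := by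
        rw [show torDist y' x' = torDist x' y' from dist_comm _ _]

lemma ite_or_eq_add {P Q : Prop} [Decidable P] [Decidable Q] {M : Type*} [AddZeroClass M]
    (h : ¬(P ∧ Q)) (m : M) :
    (if P ∨ Q then m else 0) = (if P then m else 0) + (if Q then m else 0) := by
  by_cases hP : P <;> by_cases hQ : Q <;> simp_all

section TransportPlan

variable {α β R : Type*}

lemma sum_sum_pos_iff [AddCommMonoid R] [PartialOrder R] [AddLeftMono R] {p : α → β → R}
    (hp : ∀ a b, 0 ≤ p a b) (s : Finset α) (t : Finset β) :
    0 < ∑ a ∈ s, ∑ b ∈ t, p a b ↔ ∃ a ∈ s, ∃ b ∈ t, 0 < p a b := by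
  rw [Finset.sum_pos_iff_of_nonneg fun a _ => Finset.sum_nonneg fun b _ => hp a b]
  simp only [Finset.sum_pos_iff_of_nonneg fun b _ => hp _ b]

variable [Fintype α] [Fintype β] [DecidableEq α] [DecidableEq β]

lemma sum_sum_compl_eq_of_sum_sum_eq [AddCommGroup R] {p : α → β → R} {P : Finset α}
    {Q : Finset β} (h : ∑ a ∈ P, ∑ b, p a b = ∑ b ∈ Q, ∑ a, p a b) :
    ∑ a ∈ P, ∑ b ∈ Qᶜ, p a b = ∑ a ∈ Pᶜ, ∑ b ∈ Q, p a b := by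
  simp only [← Finset.sum_add_sum_compl Q (p _), ← Finset.sum_add_sum_compl P (p · _),
    Finset.sum_add_distrib] at h
  rw [Finset.sum_comm (s := Q) (t := P), Finset.sum_comm (s := Q) (t := Pᶜ)] at h
  exact add_left_cancel h

lemma exists_pos_of_pos_of_sum_sum_eq [AddCommGroup R] [PartialOrder R] [IsOrderedAddMonoid R]
    {p : α → β → R} (hp : ∀ a b, 0 ≤ p a b) {P : Finset α} {Q : Finset β}
    (h : ∑ a ∈ P, ∑ b, p a b = ∑ b ∈ Q, ∑ a, p a b)
    {i : α} {j : β} (hi : i ∈ P) (hj : j ∉ Q) (hij : 0 < p i j) :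
    ∃ a ∉ P, ∃ b ∈ Q, 0 < p a b := by
  have hout : 0 < ∑ a ∈ P, ∑ b ∈ Qᶜ, p a b :=
    (sum_sum_pos_iff hp _ _).2 ⟨i, hi, j, Finset.mem_compl.2 hj, hij⟩
  obtain ⟨a, ha, b, hb, hab⟩ :=
    (sum_sum_pos_iff hp _ _).1 (hout.trans_eq (sum_sum_compl_eq_of_sum_sum_eq h))
  exact ⟨a, Finset.mem_compl.1 ha, b, hb, hab⟩

variable [CommRing R]

lemma sum_sum_ite_and_mul (m : R) (C : α → β → R) (i : α) (j : β) :
    ∑ a, ∑ b, (if a = i ∧ b = j then m else 0) * C a b = m * C i j := by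
  simp [ite_and, ite_mul]

lemma sum_sum_swap_mul (p C : α → β → R) {i i' : α} (hi : i ≠ i') (j j' : β) (m : R) :
    ∑ a, ∑ b, (p a b + (if (a = i ∧ b = j') ∨ (a = i' ∧ b = j) then m else 0)
        - (if (a = i ∧ b = j) ∨ (a = i' ∧ b = j') then m else 0)) * C a b
      = ∑ a, ∑ b, p a b * C a b + m * (C i j' + C i' j - (C i j + C i' j')) := by
  have disj (b₁ b₂ : β) (a : α) (b : β) : ¬((a = i ∧ b = b₁) ∧ (a = i' ∧ b = b₂)) :=
    fun h => hi (h.1.1.symm.trans h.2.1)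
  simp only [ite_or_eq_add (disj _ _ _ _), add_mul, sub_mul, Finset.sum_add_distrib,
    Finset.sum_sub_distrib, sum_sum_ite_and_mul]
  ring

end TransportPlan

theorem stmt_9_general {M N : ℕ} (φ : Fin M → ℝ) (ψ : Fin N → ℝ)
    (fm : Fin M → ℝ) (gm : Fin N → ℝ) (p : Fin M → Fin N → ℝ)
    (hφ : ∀ i, φ i ∈ Ioo (Real.pi/4) (3*Real.pi/4) ∪ Ioo (-(3*Real.pi/4)) (-(Real.pi/4)))
    (hp_nonneg : ∀ i j, 0 ≤ p i j)
    (hrow : ∀ i, ∑ j, p i j = fm i) (hcol : ∀ j, ∑ i, p i j = gm j)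
    (hmass : ∑ i ∈ Finset.univ.filter (fun i => φ i ∈ Ioo (Real.pi/4) (3*Real.pi/4)), fm i
           = ∑ j ∈ Finset.univ.filter (fun j => ψ j ∈ Ioo (Real.pi/4) (3*Real.pi/4)), gm j)
    (i : Fin M) (j : Fin N)
    (hi : φ i ∈ Ioo (Real.pi/4) (3*Real.pi/4)) (hj : ψ j ∈ Ioo (-(3*Real.pi/4)) (-(Real.pi/4)))
    (hij : 0 < p i j) :
    ∃ istar : Fin M, ∃ jstar : Fin N,
      φ istar ∈ Ioo (-(3*Real.pi/4)) (-(Real.pi/4)) ∧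
      ψ jstar ∈ Ioo (Real.pi/4) (3*Real.pi/4) ∧
      0 < p istar jstar ∧
      (∑ a, ∑ b,
          (p a b
            + (if (a = i ∧ b = jstar) ∨ (a = istar ∧ b = j)
                then min (p i j) (p istar jstar) else 0)
            - (if (a = i ∧ b = j) ∨ (a = istar ∧ b = jstar)
                then min (p i j) (p istar jstar) else 0))
          * torDist (φ a) (ψ b) ^ 2)
        ≤ ∑ a, ∑ b, p a b * torDist (φ a) (ψ b) ^ 2 := by
  have hbal : ∑ a ∈ univ.filter (fun a => φ a ∈ 𝕋₊), ∑ b, p a b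
      = ∑ b ∈ univ.filter (fun b => ψ b ∈ 𝕋₊), ∑ a, p a b := by
    simpa only [hrow, hcol] using hmass
  have hψj : ψ j ∉ 𝕋₊ := fun h => by linarith [h.1, hj.2, Real.pi_pos]
  obtain ⟨istar, histar, jstar, hjstar, hpos⟩ := exists_pos_of_pos_of_sum_sum_eq hp_nonneg hbal
    (by simpa using hi) (by simpa using hψj) hij
  simp only [Finset.mem_filter, Finset.mem_univ, true_and] at histar hjstar
  have hφistar : φ istar ∈ 𝕋₋ := (hφ istar).resolve_left histar
  refine ⟨istar, jstar, hφistar, hjstar, hpos, ?_⟩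
  rw [sum_sum_swap_mul _ _ fun h : i = istar => histar (h ▸ hi)]
  have hcost := torDist_sq_add_torDist_sq_le hi hφistar hj hjstar
  linarith [mul_nonpos_of_nonneg_of_nonpos (le_min hij.le hpos.le) (sub_nonpos.2 hcost)]

theorem stmt_9 {M N : ℕ} (φ : Fin M → ℝ) (ψ : Fin N → ℝ)
    (fm : Fin M → ℝ) (gm : Fin N → ℝ) (p : Fin M → Fin N → ℝ)
    (hφ : ∀ i, φ i ∈ Ioo (Real.pi/4) (3*Real.pi/4) ∪ Ioo (-(3*Real.pi/4)) (-(Real.pi/4)))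
    (hψ : ∀ j, ψ j ∈ Ioo (Real.pi/4) (3*Real.pi/4) ∪ Ioo (-(3*Real.pi/4)) (-(Real.pi/4)))
    (hp_nonneg : ∀ i j, 0 ≤ p i j)
    (hrow : ∀ i, ∑ j, p i j = fm i) (hcol : ∀ j, ∑ i, p i j = gm j)
    (hmass : ∑ i ∈ Finset.univ.filter (fun i => φ i ∈ Ioo (Real.pi/4) (3*Real.pi/4)), fm i
           = ∑ j ∈ Finset.univ.filter (fun j => ψ j ∈ Ioo (Real.pi/4) (3*Real.pi/4)), gm j)
    (i : Fin M) (j : Fin N)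
    (hi : φ i ∈ Ioo (Real.pi/4) (3*Real.pi/4)) (hj : ψ j ∈ Ioo (-(3*Real.pi/4)) (-(Real.pi/4)))
    (hij : 0 < p i j) :
    ∃ istar : Fin M, ∃ jstar : Fin N,
      φ istar ∈ Ioo (-(3*Real.pi/4)) (-(Real.pi/4)) ∧
      ψ jstar ∈ Ioo (Real.pi/4) (3*Real.pi/4) ∧
      0 < p istar jstar ∧
      (∑ a, ∑ b,
          (p a b
            + (if (a = i ∧ b = jstar) ∨ (a = istar ∧ b = j)
                then min (p i j) (p istar jstar) else 0)
            - (if (a = i ∧ b = j) ∨ (a = istar ∧ b = jstar)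
                then min (p i j) (p istar jstar) else 0))
          * torDist (φ a) (ψ b) ^ 2)
        ≤ ∑ a, ∑ b, p a b * torDist (φ a) (ψ b) ^ 2 :=
  stmt_9_general φ ψ fm gm p hφ hp_nonneg hrow hcol hmass i j hi hj hij
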